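/- arXiv:1705.04093 — 2 statements merged into one kernel-verified Lean document; each statement's English description precedes it below -/
import Mathlib

section
/- Let W be a real k×r matrix. Then det(ZᵀW) ≠ 0 if and only if there exist X ∈ ℝ^{(k−r)×r} and an invertible G ∈ ℝ^{r×r} such that W = (Z + Z_⊥X)·G. Moreover, in that case the pair (X, G) is unique and is given explicitly by G = Z⁺W and X = Z_⊥⁺W·(Z⁺W)⁻¹; that is, the chart ξ_Z : 𝒱_Z → ℝ^{(k−r)×r} × GL_r with ξ_Z⁻¹(X,G) = (Z + Z_⊥X)G is a bijection, where 𝒱_Z := {W ∈ ℝ^{k×r} : det(ZᵀW) ≠ 0}. -/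
/-!
`Z⁺` and `Z_⊥⁺` are left inverses of `Z` and `Z_⊥` that annihilate each other's columns, and since
the block matrix `[Z Z_⊥]` is square, `Z Z⁺ + Z_⊥ Z_⊥⁺ = 1`. Applying `Z⁺` and `Z_⊥⁺` to
`W = (Z + Z_⊥ X) G` returns `G` and `X G`, which forces the formulas for `G` and `X` and makes
`Z⁺ W = (Zᵀ Z)⁻¹ Zᵀ W` invertible. Conversely, if `Z⁺ W` is invertible, then splitting
`W = Z (Z⁺ W) + Z_⊥ (Z_⊥⁺ W)` exhibits `W` in the required form.
-/

open Matrix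

namespace Matrix

variable {K m n p : Type*} [Field K] [Fintype m]

theorem isUnit_of_rank_eq_card [Fintype n] [DecidableEq n] {A : Matrix n n K}
    (h : A.rank = Fintype.card n) : IsUnit A := by
  rw [← mulVec_surjective_iff_isUnit]
  change Function.Surjective A.mulVecLin
  rw [← LinearMap.range_eq_top]
  refine Submodule.eq_top_of_finrank_eq ?_
  rw [← rank, h, Module.finrank_fintype_fun_eq_card]

theorem isUnit_transpose_mul_self_of_rank_eq_card [Fintype n] [DecidableEq n] [LinearOrder K]
    [IsStrictOrderedRing K] {A : Matrix m n K} (h : A.rank = Fintype.card n) :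
    IsUnit (Aᵀ * A) :=
  isUnit_of_rank_eq_card (by rw [rank_transpose_mul_self, h])

/-- The paper's `A⁺`; it is the Moore–Penrose pseudo-inverse only when `Aᵀ * A` is invertible. -/
noncomputable def pinv [Fintype n] [DecidableEq n] (A : Matrix m n K) : Matrix n m K :=
  (Aᵀ * A)⁻¹ * Aᵀ

theorem pinv_mul_self [Fintype n] [DecidableEq n] {A : Matrix m n K} (hA : IsUnit (Aᵀ * A)) :
    pinv A * A = 1 := by
  rw [pinv, Matrix.mul_assoc, nonsing_inv_mul _ ((isUnit_iff_isUnit_det _).mp hA)]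

theorem pinv_mul_eq_zero [Fintype n] [DecidableEq n] {A : Matrix m n K} {B : Matrix m p K}
    (h : Aᵀ * B = 0) : pinv A * B = 0 := by
  rw [pinv, Matrix.mul_assoc, h, Matrix.mul_zero]

theorem isUnit_pinv_mul_iff [Fintype n] [DecidableEq n] {A W : Matrix m n K}
    (hA : IsUnit (Aᵀ * A)) : IsUnit (pinv A * W) ↔ (Aᵀ * W).det ≠ 0 := by
  rw [pinv, Matrix.mul_assoc, isUnit_iff_isUnit_det, det_mul, IsUnit.mul_iff,
    ← isUnit_iff_isUnit_det, isUnit_nonsing_inv_iff, isUnit_iff_ne_zero]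
  exact and_iff_right hA

section Chart

variable [Fintype n] [DecidableEq n] [Fintype p] [DecidableEq p]
  {Z : Matrix m n K} {Zperp : Matrix m p K}

theorem mul_pinv_add_mul_pinv_eq_one [DecidableEq m]
    (hcard : Fintype.card n + Fintype.card p = Fintype.card m)
    (hZ : IsUnit (Zᵀ * Z)) (hZperp : IsUnit (Zperpᵀ * Zperp)) (horth : Zᵀ * Zperp = 0) :
    Z * pinv Z + Zperp * pinv Zperp = 1 := by
  have horth' : Zperpᵀ * Z = 0 := by
    rw [← transpose_transpose Z, ← transpose_mul, horth, transpose_zero]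
  -- `[Z Z_⊥]` is square, so its left inverse `[Z⁺; Z_⊥⁺]` is also a right inverse.
  let e : m ≃ n ⊕ p := Fintype.equivOfCardEq (by rw [Fintype.card_sum, hcard])
  rw [← fromCols_mul_fromRows, fromCols_mul_fromRows_eq_one_comm e, fromRows_mul_fromCols,
    pinv_mul_self hZ, pinv_mul_self hZperp, pinv_mul_eq_zero horth, pinv_mul_eq_zero horth',
    fromBlocks_one]

theorem pinv_mul_add_mul_mul (hZ : IsUnit (Zᵀ * Z)) (hZperp : IsUnit (Zperpᵀ * Zperp))
    (horth : Zᵀ * Zperp = 0) (X : Matrix p n K) (G : Matrix n n K) :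
    pinv Z * ((Z + Zperp * X) * G) = G ∧ pinv Zperp * ((Z + Zperp * X) * G) = X * G := by
  have horth' : Zperpᵀ * Z = 0 := by
    rw [← transpose_transpose Z, ← transpose_mul, horth, transpose_zero]
  refine ⟨?_, ?_⟩ <;>
  simp only [← Matrix.mul_assoc, Matrix.mul_add, pinv_mul_self hZ, pinv_mul_self hZperp,
    pinv_mul_eq_zero horth, pinv_mul_eq_zero horth', Matrix.one_mul, Matrix.zero_mul, add_zero,
    zero_add]

theorem isUnit_pinv_mul_iff_exists_eq_add_mul_mul [DecidableEq m]
    (hcard : Fintype.card n + Fintype.card p = Fintype.card m)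
    (hZ : IsUnit (Zᵀ * Z)) (hZperp : IsUnit (Zperpᵀ * Zperp)) (horth : Zᵀ * Zperp = 0)
    (W : Matrix m n K) :
    IsUnit (pinv Z * W) ↔ ∃ (X : Matrix p n K) (G : Matrix n n K),
      IsUnit G ∧ W = (Z + Zperp * X) * G := by
  constructor
  · intro hG
    have hGdet := (isUnit_iff_isUnit_det _).mp hG
    refine ⟨pinv Zperp * W * (pinv Z * W)⁻¹, pinv Z * W, hG, ?_⟩
    calc W = (Z * pinv Z + Zperp * pinv Zperp) * W := by
          rw [mul_pinv_add_mul_pinv_eq_one hcard hZ hZperp horth, Matrix.one_mul]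
      _ = _ := by
          rw [Matrix.add_mul, Matrix.add_mul, Matrix.mul_assoc, Matrix.mul_assoc Zperp,
            Matrix.mul_assoc Zperp, nonsing_inv_mul_cancel_right _ _ hGdet]
  · rintro ⟨X, G, hG, rfl⟩
    rwa [(pinv_mul_add_mul_mul hZ hZperp horth X G).1]

theorem eq_pinv_mul_of_eq_add_mul_mul (hZ : IsUnit (Zᵀ * Z))
    (hZperp : IsUnit (Zperpᵀ * Zperp)) (horth : Zᵀ * Zperp = 0) {W : Matrix m n K}
    {X : Matrix p n K} {G : Matrix n n K} (hG : IsUnit G) (hW : W = (Z + Zperp * X) * G) :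
    G = pinv Z * W ∧ X = pinv Zperp * W * (pinv Z * W)⁻¹ := by
  obtain ⟨hGW, hXGW⟩ := pinv_mul_add_mul_mul hZ hZperp horth X G
  rw [hW, hGW, hXGW, mul_nonsing_inv_cancel_right _ _ ((isUnit_iff_isUnit_det _).mp hG)]
  exact ⟨rfl, rfl⟩

end Chart

end Matrix

theorem stmt11_general (k r : ℕ)
    (Z : Matrix (Fin k) (Fin r) ℝ) (hZ : Z.rank = r)
    (Zperp : Matrix (Fin k) (Fin (k - r)) ℝ) (hZperp : Zperp.rank = k - r)
    (horth : Zᵀ * Zperp = 0)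
    (W : Matrix (Fin k) (Fin r) ℝ) :
    ((Zᵀ * W).det ≠ 0 ↔
      ∃ (X : Matrix (Fin (k - r)) (Fin r) ℝ) (G : Matrix (Fin r) (Fin r) ℝ),
        IsUnit G ∧ W = (Z + Zperp * X) * G) ∧
    (∀ (X : Matrix (Fin (k - r)) (Fin r) ℝ) (G : Matrix (Fin r) (Fin r) ℝ),
      IsUnit G → W = (Z + Zperp * X) * G →
        G = (Zᵀ * Z)⁻¹ * Zᵀ * W ∧
        X = (Zperpᵀ * Zperp)⁻¹ * Zperpᵀ * W * ((Zᵀ * Z)⁻¹ * Zᵀ * W)⁻¹) := by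
  have hrk : r ≤ k := hZ ▸ Z.rank_le_height
  have hcard : Fintype.card (Fin r) + Fintype.card (Fin (k - r)) = Fintype.card (Fin k) := by
    simp only [Fintype.card_fin]
    omega
  have hZZ : IsUnit (Zᵀ * Z) := isUnit_transpose_mul_self_of_rank_eq_card (by simpa using hZ)
  have hPP : IsUnit (Zperpᵀ * Zperp) :=
    isUnit_transpose_mul_self_of_rank_eq_card (by simpa using hZperp)
  exact ⟨(isUnit_pinv_mul_iff hZZ).symm.trans
      (isUnit_pinv_mul_iff_exists_eq_add_mul_mul hcard hZZ hPP horth W),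
    fun X G hG hW => eq_pinv_mul_of_eq_add_mul_mul hZZ hPP horth hG hW⟩

/-- `det (Zᵀ W) ≠ 0` iff `W = (Z + Z_⊥ X) G` for some `X` and invertible `G`,
and in that case the pair `(X, G)` is unique, given by `G = Z⁺ W`, `X = Z_⊥⁺ W (Z⁺ W)⁻¹`. -/
theorem stmt11 (k r : ℕ) (hr : 0 < r) (hrk : r < k)
    (Z : Matrix (Fin k) (Fin r) ℝ) (hZ : Z.rank = r)
    (Zperp : Matrix (Fin k) (Fin (k - r)) ℝ) (hZperp : Zperp.rank = k - r)
    (horth : Zᵀ * Zperp = 0)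
    (W : Matrix (Fin k) (Fin r) ℝ) :
    ((Zᵀ * W).det ≠ 0 ↔
      ∃ (X : Matrix (Fin (k - r)) (Fin r) ℝ) (G : Matrix (Fin r) (Fin r) ℝ),
        IsUnit G ∧ W = (Z + Zperp * X) * G) ∧
    (∀ (X : Matrix (Fin (k - r)) (Fin r) ℝ) (G : Matrix (Fin r) (Fin r) ℝ),
      IsUnit G → W = (Z + Zperp * X) * G →
        G = (Zᵀ * Z)⁻¹ * Zᵀ * W ∧
        X = (Zperpᵀ * Zperp)⁻¹ * Zperpᵀ * W * ((Zᵀ * Z)⁻¹ * Zᵀ * W)⁻¹) :=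
  stmt11_general k r Z hZ Zperp hZperp horth W
end

section
/- For all X ∈ ℝ^{(n−r)×r}, Y ∈ ℝ^{(m−r)×r} and H ∈ ℝ^{r×r}, one has exp(U_⊥XU⁺) · (U H Vᵀ) · (exp(V_⊥YV⁺))ᵀ = (U + U_⊥X)·H·(V + V_⊥Y)ᵀ, where exp denotes the matrix exponential. -/
/-!
If `L` is a left inverse of `U` with `L P = 0`, then `N = P X L` satisfies `N² = P X (L P) X L = 0`,
so the exponential series stops after two terms and `exp N * U = (1 + N) U = U + P X`.
Here `L = U⁺` is a left inverse of `U` because `UᵀU` has full rank, and `U⁺ U_⊥ = 0` because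
`Uᵀ U_⊥ = 0`; the same holds for `V`, and `exp N (U H Vᵀ) (exp M)ᵀ = (exp N U) H (exp M V)ᵀ`.
-/

open Matrix

theorem NormedSpace.exp_eq_one_add_of_mul_self_eq_zero {𝔸 : Type*} [Ring 𝔸] [Algebra ℚ 𝔸]
    [TopologicalSpace 𝔸] [IsTopologicalRing 𝔸] {a : 𝔸} (h : a * a = 0) : exp a = 1 + a := by
  rw [exp_eq_tsum ℚ]
  refine (tsum_eq_sum (s := Finset.range 2) ?_).trans ?_
  · intro k hk
    obtain ⟨j, rfl⟩ : ∃ j, k = j + 2 := ⟨k - 2, by simp at hk; omega⟩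
    rw [pow_add, sq, h, mul_zero, smul_zero]
  · simp [Finset.sum_range_succ]

namespace Matrix

variable {m p k R : Type*} [Fintype m] [Fintype p] [Fintype k] [DecidableEq k]

theorem isUnit_transpose_mul_self_of_rank_eq [Field R] [LinearOrder R] [IsStrictOrderedRing R]
    {U : Matrix m k R} (hU : U.rank = Fintype.card k) : IsUnit (Uᵀ * U) := by
  rw [← mulVec_surjective_iff_isUnit]
  refine (LinearMap.range_eq_top (f := (Uᵀ * U).mulVecLin)).mp (Submodule.eq_top_of_finrank_eq ?_)
  rw [Module.finrank_fintype_fun_eq_card, ← hU, ← rank_transpose_mul_self]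
  rfl

theorem exp_mul_mul_mul_eq_add_of_mul_eq_one [DecidableEq m] [Field R] [CharZero R]
    [TopologicalSpace R] [IsTopologicalRing R] (P : Matrix m p R) (X : Matrix p k R) {U : Matrix m k R}
    {L : Matrix k m R} (hLU : L * U = 1) (hLP : L * P = 0) :
    NormedSpace.exp (P * X * L) * U = U + P * X := by
  have hsq : P * X * L * (P * X * L) = 0 := by
    calc P * X * L * (P * X * L) = P * X * (L * P * X * L) := by simp only [Matrix.mul_assoc]
      _ = 0 := by rw [hLP]; simp
  rw [NormedSpace.exp_eq_one_add_of_mul_self_eq_zero hsq, Matrix.add_mul, Matrix.one_mul,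
    Matrix.mul_assoc, hLU, Matrix.mul_one]

theorem exp_mul_mul_pinv_mul_self [DecidableEq m] [Field R] [LinearOrder R] [IsStrictOrderedRing R]
    [TopologicalSpace R] [IsTopologicalRing R] (P : Matrix m p R) (X : Matrix p k R)
    {U : Matrix m k R} (hU : U.rank = Fintype.card k) (hUP : Uᵀ * P = 0) :
    NormedSpace.exp (P * X * ((Uᵀ * U)⁻¹ * Uᵀ)) * U = U + P * X := by
  have hdet := (isUnit_iff_isUnit_det _).mp (isUnit_transpose_mul_self_of_rank_eq hU)
  refine exp_mul_mul_mul_eq_add_of_mul_eq_one P X ?_ ?_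
  · rw [Matrix.mul_assoc, nonsing_inv_mul _ hdet]
  · rw [Matrix.mul_assoc, hUP, Matrix.mul_zero]

end Matrix

theorem stmt18_general (n m r : ℕ)
    (U : Matrix (Fin n) (Fin r) ℝ) (hU : U.rank = r)
    (V : Matrix (Fin m) (Fin r) ℝ) (hV : V.rank = r)
    (Uperp : Matrix (Fin n) (Fin (n - r)) ℝ)
    (Vperp : Matrix (Fin m) (Fin (m - r)) ℝ)
    (horthU : Uᵀ * Uperp = 0) (horthV : Vᵀ * Vperp = 0)
    (X : Matrix (Fin (n - r)) (Fin r) ℝ) (Y : Matrix (Fin (m - r)) (Fin r) ℝ)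
    (H : Matrix (Fin r) (Fin r) ℝ) :
    NormedSpace.exp (Uperp * X * ((Uᵀ * U)⁻¹ * Uᵀ)) * (U * H * Vᵀ) *
        (NormedSpace.exp (Vperp * Y * ((Vᵀ * V)⁻¹ * Vᵀ)))ᵀ
      = (U + Uperp * X) * H * (V + Vperp * Y)ᵀ := by
  have hUr : U.rank = Fintype.card (Fin r) := by rw [hU, Fintype.card_fin]
  have hVr : V.rank = Fintype.card (Fin r) := by rw [hV, Fintype.card_fin]
  rw [← exp_mul_mul_pinv_mul_self Uperp X hUr horthU,
    ← exp_mul_mul_pinv_mul_self Vperp Y hVr horthV, transpose_mul]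
  simp only [Matrix.mul_assoc]

/-- `exp (U_⊥ X U⁺) (U H Vᵀ) (exp (V_⊥ Y V⁺))ᵀ = (U + U_⊥ X) H (V + V_⊥ Y)ᵀ`. -/
theorem stmt18 (n m r : ℕ) (hr : 0 < r) (hrn : r < n) (hrm : r < m)
    (U : Matrix (Fin n) (Fin r) ℝ) (hU : U.rank = r)
    (V : Matrix (Fin m) (Fin r) ℝ) (hV : V.rank = r)
    (Uperp : Matrix (Fin n) (Fin (n - r)) ℝ) (hUperp : Uperp.rank = n - r)
    (Vperp : Matrix (Fin m) (Fin (m - r)) ℝ) (hVperp : Vperp.rank = m - r)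
    (horthU : Uᵀ * Uperp = 0) (horthV : Vᵀ * Vperp = 0)
    (X : Matrix (Fin (n - r)) (Fin r) ℝ) (Y : Matrix (Fin (m - r)) (Fin r) ℝ)
    (H : Matrix (Fin r) (Fin r) ℝ) :
    NormedSpace.exp (Uperp * X * ((Uᵀ * U)⁻¹ * Uᵀ)) * (U * H * Vᵀ) *
        (NormedSpace.exp (Vperp * Y * ((Vᵀ * V)⁻¹ * Vᵀ)))ᵀ
      = (U + Uperp * X) * H * (V + Vperp * Y)ᵀ :=
  stmt18_general n m r U hU V hV Uperp Vperp horthU horthV X Y H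
end
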